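/- arXiv:1801.00131 — 3 statements merged into one kernel-verified Lean document; each statement's English description precedes it below -/
import Mathlib

section
/- Let G be an additive abelian group and S a finite zero-sum free subset of G (i.e., no nonempty subset of S has sum 0). Then the number of distinct elements expressible as a sum of a nonempty subset of S is at least 2|S| - 1. -/
open Finset

def sigmaSet {G : Type*} [AddCommGroup G] [DecidableEq G] (S : Finset G) : Finset G :=
  (S.powerset.filter (· ≠ ∅)).image (fun T => T.sum id)

def ZeroSumFree {G : Type*} [AddCommGroup G] (S : Finset G) : Prop :=
  ∀ T ⊆ S, T ≠ ∅ → T.sum id ≠ 0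

section aux
variable {G : Type*} [AddCommGroup G] [DecidableEq G]

lemma mem_sigmaSet {S : Finset G} {x : G} :
    x ∈ sigmaSet S ↔ ∃ T, T ⊆ S ∧ T ≠ ∅ ∧ T.sum id = x := by
  constructor
  · intro h
    rcases Finset.mem_image.mp h with ⟨T, hT, rfl⟩
    rcases Finset.mem_filter.mp hT with ⟨hp, hne⟩
    exact ⟨T, Finset.mem_powerset.mp hp, hne, rfl⟩
  · rintro ⟨T, hsub, hne, rfl⟩
    exact Finset.mem_image.mpr ⟨T, Finset.mem_filter.mpr ⟨Finset.mem_powerset.mpr hsub, hne⟩, rfl⟩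

lemma sum_mem_sigmaSet {S T : Finset G} (h : T ⊆ S) (hne : T ≠ ∅) :
    T.sum id ∈ sigmaSet S := mem_sigmaSet.mpr ⟨T, h, hne, rfl⟩

lemma zsf_mono {S S' : Finset G} (h : S' ⊆ S) (hS : ZeroSumFree S) : ZeroSumFree S' :=
  fun T hT => hS T (hT.trans h)

lemma zero_notMem_sigmaSet {S : Finset G} (hS : ZeroSumFree S) : (0 : G) ∉ sigmaSet S := by
  intro h
  rcases mem_sigmaSet.mp h with ⟨T, hsub, hne, hsum⟩
  exact hS T hsub hne hsum

lemma neg_notMem_erase {S : Finset G} (hS : ZeroSumFree S) {a : G} (ha : a ∈ S) :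
    -a ∉ sigmaSet (S.erase a) := by
  intro h
  rcases mem_sigmaSet.mp h with ⟨T, hsub, hne, hsum⟩
  have haT : a ∉ T := fun hmem => (Finset.notMem_erase a S) (hsub hmem)
  have hzero : (insert a T).sum id = 0 := by
    rw [Finset.sum_insert haT, hsum]; simp
  exact hS (insert a T)
    (Finset.insert_subset ha (hsub.trans (Finset.erase_subset a S)))
    (by simp) hzero

lemma total_notMem_erase {S : Finset G} (hS : ZeroSumFree S) {a : G} (ha : a ∈ S) :
    S.sum id ∉ sigmaSet (S.erase a) := by
  intro h
  rcases mem_sigmaSet.mp h with ⟨T, hsub, hne, hsum⟩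
  have hTS : T ⊆ S := hsub.trans (Finset.erase_subset a S)
  have hsd : (S \ T).sum id + T.sum id = S.sum id := Finset.sum_sdiff hTS
  have hzero : (S \ T).sum id = 0 := by
    rw [hsum] at hsd
    exact add_right_cancel (by rw [hsd, zero_add])
  have haST : a ∈ S \ T :=
    Finset.mem_sdiff.mpr ⟨ha, fun hmem => (Finset.notMem_erase a S) (hsub hmem)⟩
  exact hS (S \ T) (Finset.sdiff_subset) (Finset.ne_empty_of_mem haST) hzero

lemma sigmaSet_eq_insert {S : Finset G} (hS : ZeroSumFree S) {a : G} (ha : a ∈ S)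
    (hbad : (sigmaSet S).card ≤ (sigmaSet (S.erase a)).card + 1) :
    sigmaSet S = insert (S.sum id) (sigmaSet (S.erase a)) := by
  have hsub : insert (S.sum id) (sigmaSet (S.erase a)) ⊆ sigmaSet S := by
    intro x hx
    rcases Finset.mem_insert.mp hx with rfl | hx
    · exact sum_mem_sigmaSet (Finset.Subset.refl S) (Finset.ne_empty_of_mem ha)
    · rcases mem_sigmaSet.mp hx with ⟨T, hsub', hne, rfl⟩
      exact sum_mem_sigmaSet (hsub'.trans (Finset.erase_subset a S)) hne
  have hcard : (sigmaSet S).card ≤ (insert (S.sum id) (sigmaSet (S.erase a))).card := by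
    rw [Finset.card_insert_of_notMem (total_notMem_erase hS ha)]
    exact hbad
  exact (Finset.eq_of_subset_of_card_le hsub hcard).symm

lemma a_mem_D {S : Finset G} (hS : ZeroSumFree S) {a : G} (ha : a ∈ S) (h2 : 1 < S.card)
    (hEq : sigmaSet S = insert (S.sum id) (sigmaSet (S.erase a))) :
    a ∈ sigmaSet (S.erase a) := by
  have haS : a ∈ sigmaSet S := by
    have := sum_mem_sigmaSet (Finset.singleton_subset_iff.mpr ha)
      (Finset.singleton_ne_empty a)
    simpa using this
  rw [hEq] at haS
  rcases Finset.mem_insert.mp haS with hac | h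
  · exfalso
    have hne : S.erase a ≠ ∅ := by
      have := Finset.card_erase_of_mem ha
      intro hempty
      rw [hempty] at this
      simp at this
      omega
    have hsum : (S.erase a).sum id = 0 := by
      have := Finset.sum_erase_eq_sub (f := id) ha
      rw [this, ← hac]
      simp
    exact hS (S.erase a) (Finset.erase_subset a S) hne hsum
  · exact h

lemma starStep {S : Finset G} (hS : ZeroSumFree S) {a : G} (ha : a ∈ S) (h2 : 1 < S.card)
    (hEq : sigmaSet S = insert (S.sum id) (sigmaSet (S.erase a))) :
    (sigmaSet (S.erase a)).image (· + a)
      = insert (S.sum id) ((sigmaSet (S.erase a)).erase a) := by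
  set D := sigmaSet (S.erase a) with hD
  have h0D : (0 : G) ∉ D := zero_notMem_sigmaSet (zsf_mono (Finset.erase_subset a S) hS)
  have haD : a ∈ D := a_mem_D hS ha h2 hEq
  have hcD : S.sum id ∉ D := total_notMem_erase hS ha
  have hsub : D.image (· + a) ⊆ insert (S.sum id) (D.erase a) := by
    intro y hy
    rcases Finset.mem_image.mp hy with ⟨x, hx, rfl⟩
    rcases mem_sigmaSet.mp hx with ⟨T, hsubT, hne, rfl⟩
    have haT : a ∉ T := fun hmem => (Finset.notMem_erase a S) (hsubT hmem)
    have hmem : T.sum id + a ∈ sigmaSet S := by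
      have : (insert a T).sum id = T.sum id + a := by
        rw [Finset.sum_insert haT]; simp [add_comm]
      rw [← this]
      exact sum_mem_sigmaSet
        (Finset.insert_subset ha (hsubT.trans (Finset.erase_subset a S))) (by simp)
    rw [hEq] at hmem
    rcases Finset.mem_insert.mp hmem with hc | hmem'
    · rw [hc]; exact Finset.mem_insert_self _ _
    · apply Finset.mem_insert_of_mem
      refine Finset.mem_erase.mpr ⟨?_, hmem'⟩
      intro heq
      rw [add_eq_right.mp heq] at hx
      exact h0D hx
  have hcard : (insert (S.sum id) (D.erase a)).card ≤ (D.image (· + a)).card := by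
    rw [Finset.card_image_of_injective D (add_left_injective a)]
    rw [Finset.card_insert_of_notMem (fun h => hcD (Finset.mem_of_mem_erase h))]
    rw [Finset.card_erase_of_mem haD]
    have : 1 ≤ D.card := Finset.card_pos.mpr ⟨a, haD⟩
    omega
  exact Finset.eq_of_subset_of_card_le hsub hcard

lemma symmStep {S : Finset G} (hS : ZeroSumFree S) {a : G} (ha : a ∈ S)
    (hEq : sigmaSet S = insert (S.sum id) (sigmaSet (S.erase a))) :
    (sigmaSet (S.erase a)).image (fun x => S.sum id - x) = sigmaSet (S.erase a) := by
  set D := sigmaSet (S.erase a) with hD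
  have h0D : (0 : G) ∉ D := zero_notMem_sigmaSet (zsf_mono (Finset.erase_subset a S) hS)
  have hsub : D.image (fun x => S.sum id - x) ⊆ D := by
    intro y hy
    rcases Finset.mem_image.mp hy with ⟨x, hx, rfl⟩
    rcases mem_sigmaSet.mp hx with ⟨T, hsubT, hne, rfl⟩
    have hTS : T ⊆ S := hsubT.trans (Finset.erase_subset a S)
    have hsd : (S \ T).sum id + T.sum id = S.sum id := Finset.sum_sdiff hTS
    have hrepr : (S \ T).sum id = S.sum id - T.sum id := by
      rw [eq_sub_iff_add_eq]; exact hsd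
    have haST : a ∈ S \ T :=
      Finset.mem_sdiff.mpr ⟨ha, fun hmem => (Finset.notMem_erase a S) (hsubT hmem)⟩
    have hmem : S.sum id - T.sum id ∈ sigmaSet S := by
      rw [← hrepr]
      exact sum_mem_sigmaSet (Finset.sdiff_subset) (Finset.ne_empty_of_mem haST)
    rw [hEq] at hmem
    rcases Finset.mem_insert.mp hmem with hc | hmem'
    · exfalso
      rw [sub_eq_self.mp hc] at hx
      exact h0D hx
    · exact hmem'
  have hcard : D.card ≤ (D.image (fun x => S.sum id - x)).card := by
    rw [Finset.card_image_of_injective D (sub_right_injective)]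
  exact Finset.eq_of_subset_of_card_le hsub (le_of_eq (by
    rw [Finset.card_image_of_injective D (sub_right_injective)]))

end aux

theorem stmt0 {G : Type*} [AddCommGroup G] [DecidableEq G] (S : Finset G)
    (hS : ZeroSumFree S) : 2 * S.card - 1 ≤ (sigmaSet S).card := by
  classical
  revert hS
  induction S using Finset.strongInduction with
  | _ S ih =>
    intro hS
    by_cases hsmall : S.card ≤ 1
    · rcases Finset.eq_empty_or_nonempty S with rfl | ⟨x, hx⟩
      · simp
      · have h1 : 0 < (sigmaSet S).card :=
          Finset.card_pos.mpr ⟨S.sum id, sum_mem_sigmaSet (Finset.Subset.refl S)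
            (Finset.ne_empty_of_mem hx)⟩
        omega
    · push_neg at hsmall
      by_cases hgood : ∃ a ∈ S, (sigmaSet (S.erase a)).card + 2 ≤ (sigmaSet S).card
      · obtain ⟨a, ha, hgain⟩ := hgood
        have hzsf' : ZeroSumFree (S.erase a) := zsf_mono (Finset.erase_subset a S) hS
        have hih := ih (S.erase a) (Finset.erase_ssubset ha) hzsf'
        have hce := Finset.card_erase_of_mem ha
        omega
      · exfalso
        push_neg at hgood
        obtain ⟨a, ha, b, hb, hab⟩ := Finset.one_lt_card.mp hsmall
        have hbada : (sigmaSet S).card ≤ (sigmaSet (S.erase a)).card + 1 := by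
          have := hgood a ha; omega
        have hbadb : (sigmaSet S).card ≤ (sigmaSet (S.erase b)).card + 1 := by
          have := hgood b hb; omega
        have hEa := sigmaSet_eq_insert hS ha hbada
        have hEb := sigmaSet_eq_insert hS hb hbadb
        set c := S.sum id with hc
        -- D is the same for a and b
        have hDab : sigmaSet (S.erase b) = sigmaSet (S.erase a) := by
          have h1 : (sigmaSet S).erase c = sigmaSet (S.erase a) := by
            rw [hEa, Finset.erase_insert (total_notMem_erase hS ha)]
          have h2 : (sigmaSet S).erase c = sigmaSet (S.erase b) := by
            rw [hEb, Finset.erase_insert (total_notMem_erase hS hb)]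
          rw [← h1, ← h2]
        set D := sigmaSet (S.erase a) with hD
        have hstar_a : D.image (· + a) = insert c (D.erase a) :=
          starStep hS ha hsmall hEa
        have hstar_b : D.image (· + b) = insert c (D.erase b) := by
          have := starStep hS hb hsmall hEb
          rw [hDab] at this
          exact this
        have hsymm : D.image (fun x => c - x) = D := symmStep hS ha hEa
        have h0D : (0 : G) ∉ D := zero_notMem_sigmaSet (zsf_mono (Finset.erase_subset a S) hS)
        have ha0 : a ≠ 0 := by
          intro h
          exact h0D (h ▸ a_mem_D hS ha hsmall hEa)
        -- commute double images
        have hcomm : (D.image (· + a)).image (· + b) = (D.image (· + b)).image (· + a) := by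
          rw [Finset.image_image, Finset.image_image]
          congr 1
          funext x
          simp [add_right_comm]
        rw [hstar_a, hstar_b, Finset.image_insert, Finset.image_insert,
          Finset.image_erase (add_left_injective b), Finset.image_erase (add_left_injective a),
          hstar_a, hstar_b] at hcomm
        -- hcomm : insert (c+b) ((insert c (D.erase b)).erase (a+b))
        --       = insert (c+a) ((insert c (D.erase a)).erase (b+a))
        have hmem : c + a ∈ insert (c + b) ((insert c (D.erase b)).erase (a + b)) := by
          rw [hcomm]
          exact Finset.mem_insert_self _ _
        have hcaD : c + a ∈ D := by
          rcases Finset.mem_insert.mp hmem with heq | hmem'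
          · exact absurd (add_left_cancel heq) hab
          · have hmem'' := Finset.mem_of_mem_erase hmem'
            rcases Finset.mem_insert.mp hmem'' with heq | hmem3
            · exact absurd (by simpa using heq : a = 0) ha0
            · exact Finset.mem_of_mem_erase hmem3
        rw [← hsymm] at hcaD
        rcases Finset.mem_image.mp hcaD with ⟨y, hyD, hy⟩
        have hyna : y = -a := by
          have : c + -y = c + a := by rw [← sub_eq_add_neg]; exact hy
          have := add_left_cancel this
          rw [← this]; simp
        rw [hyna] at hyD
        exact neg_notMem_erase hS ha hyD
end

section
/- Let x be an element of order 9 in an additive abelian group G, and let T = {x, 3x, 4x, 7x}. Then T is a zero-sum free subset of G of size 4 and |Σ(T)| = 8. -/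
open Finset

lemma sigmaSet_image {G H : Type*} [AddCommGroup G] [AddCommGroup H] [DecidableEq G]
    [DecidableEq H] (f : G →+ H) (hf : Function.Injective f) (S : Finset G) :
    sigmaSet (S.image f) = (sigmaSet S).image f := by
  ext y
  simp only [sigmaSet, mem_image, mem_filter, mem_powerset]
  constructor
  · rintro ⟨T, ⟨hTs, hTne⟩, rfl⟩
    obtain ⟨T₀, hT₀, rfl⟩ := Finset.subset_image_iff.mp hTs
    refine ⟨T₀.sum id, ⟨T₀, ⟨hT₀, ?_⟩, rfl⟩, ?_⟩
    · rintro rfl; simp at hTne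
    · rw [Finset.sum_image (fun a _ b _ h => hf h)]
      simp [map_sum]
  · rintro ⟨s, ⟨T₀, ⟨hT₀, hne⟩, rfl⟩, rfl⟩
    refine ⟨T₀.image f, ⟨Finset.image_subset_image hT₀, ?_⟩, ?_⟩
    · simp [Finset.image_eq_empty, hne]
    · rw [Finset.sum_image (fun a _ b _ h => hf h)]
      simp [map_sum]

lemma zeroSumFree_iff {G : Type*} [AddCommGroup G] [DecidableEq G] (S : Finset G) :
    ZeroSumFree S ↔ 0 ∉ sigmaSet S := by
  simp only [ZeroSumFree, sigmaSet, mem_image, mem_filter, mem_powerset, not_exists]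
  constructor
  · rintro h T ⟨⟨hTs, hne⟩, h0⟩
    exact h T hTs hne h0
  · intro h T hTs hne h0
    exact h T ⟨⟨hTs, hne⟩, h0⟩

theorem stmt9 {G : Type*} [AddCommGroup G] [DecidableEq G] (x : G)
    (hx : addOrderOf x = 9) :
    ZeroSumFree ({x, 3 • x, 4 • x, 7 • x} : Finset G) ∧
      ({x, 3 • x, 4 • x, 7 • x} : Finset G).card = 4 ∧
      (sigmaSet ({x, 3 • x, 4 • x, 7 • x} : Finset G)).card = 8 := by
  have h9 : (9 : ℤ) • x = 0 := by
    have h : (9:ℕ) • x = 0 := by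
      rw [← hx]; exact addOrderOf_nsmul_eq_zero x
    have h2 : ((9:ℕ):ℤ) • x = 0 := by rw [natCast_zsmul]; exact h
    norm_num at h2
    exact h2
  set f : ZMod 9 →+ G := ZMod.lift 9 ⟨zmultiplesHom G x, by simpa using h9⟩ with hfdef
  have hfc : ∀ n : ℕ, f (n : ZMod 9) = n • x := by
    intro n
    have : ((n : ℤ) : ZMod 9) = (n : ZMod 9) := by push_cast; ring
    rw [← this, ZMod.lift_coe]
    simp [zmultiplesHom]
  have hf : Function.Injective f := by
    rw [injective_iff_map_eq_zero]
    intro k hk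
    have hk' : (k.val : ℕ) • x = 0 := by rw [← hfc, ZMod.natCast_val, ZMod.cast_id]; exact hk
    have hdvd : 9 ∣ k.val := by
      have h2 := addOrderOf_dvd_of_nsmul_eq_zero hk'
      rwa [hx] at h2
    have := ZMod.val_lt k
    interval_cases h : k.val
    · exact (ZMod.val_eq_zero k).mp h
    all_goals omega
  have hT : ({x, 3 • x, 4 • x, 7 • x} : Finset G) =
      ({1, 3, 4, 7} : Finset (ZMod 9)).image f := by
    have h1 : f 1 = x := by have := hfc 1; simpa using this
    have h3 : f 3 = 3 • x := by have := hfc 3; simpa using this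
    have h4 : f 4 = 4 • x := by have := hfc 4; simpa using this
    have h7 : f 7 = 7 • x := by have := hfc 7; simpa using this
    simp [Finset.image_insert, h1, h3, h4, h7]
  have hzsf0 : (0 : ZMod 9) ∉ sigmaSet ({1, 3, 4, 7} : Finset (ZMod 9)) := by decide
  have hcard0 : (sigmaSet ({1, 3, 4, 7} : Finset (ZMod 9))).card = 8 := by decide
  refine ⟨?_, ?_, ?_⟩
  · rw [zeroSumFree_iff, hT, sigmaSet_image f hf]
    intro h0
    obtain ⟨s, hs, h0⟩ := Finset.mem_image.mp h0
    have : s = 0 := hf (by simpa using h0)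
    exact hzsf0 (this ▸ hs)
  · rw [hT, Finset.card_image_of_injective _ hf]
    decide
  · rw [hT, sigmaSet_image f hf, Finset.card_image_of_injective _ hf, hcard0]
end

section
/- Let G be an additive abelian group and S a zero-sum free subset of G with |S| = 6 such that every element of S has order at least 3. Then for every g ∈ S, the number of nonempty subsets T of S with σ(T) = g is at most 4. -/
/-!
Write `S = {g} ∪ R` with `#R = 5`. A subset of `S` containing `g` and summing to `g` is `{g}`,
by zero-sum freeness, so it suffices to see that at most three subsets of `R` sum to `g`.
Two such subsets `A ≠ B` are incomparable (zero-sum freeness), have at least two elements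
(`g ∉ R`), and do not arise from each other by exchanging one element (the elements of `R` are
distinct). A finite search over the subsets of a five-element set shows that four subsets with
these properties always contain two pairs `{A, B}`, `{C, D}` with `1_A + 1_B = 1_C + 1_D + 2·1_x`,
whence `2x = 0`, contradicting the order assumption. For example `{a, c, e}, {b, d, e}` against
`{a, b}, {c, d}`.
-/

open Finset

namespace Finset

variable {α : Type*} [DecidableEq α]

def IsSwap (A B : Finset α) : Prop :=
  #(A \ B) = 1 ∧ #(B \ A) = 1

def Apart (A B : Finset α) : Prop :=
  ¬ A ⊆ B ∧ ¬ B ⊆ A ∧ ¬ IsSwap A B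

/-- As multisets, `A + B = C + D + {x, x}`. -/
def ExceedsByDouble (A B C D : Finset α) : Prop :=
  ∃ x ∉ C ∪ D, A ∪ B = insert x (C ∪ D) ∧ A ∩ B = insert x (C ∩ D)

def HasDoubleExcess (A B C D : Finset α) : Prop :=
  ExceedsByDouble A B C D ∨ ExceedsByDouble C D A B ∨ ExceedsByDouble A C B D ∨
    ExceedsByDouble B D A C ∨ ExceedsByDouble A D B C ∨ ExceedsByDouble B C A D

instance (A B : Finset α) : Decidable (Apart A B) := by
  unfold Apart IsSwap; infer_instance

instance [Fintype α] (A B C D : Finset α) : Decidable (HasDoubleExcess A B C D) := by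
  unfold HasDoubleExcess ExceedsByDouble; infer_instance

-- Interleaving hypotheses and quantifiers prunes the search to about 30000 quadruples.
theorem hasDoubleExcess_of_apart :
    ∀ A : Finset (Fin 5), 2 ≤ #A → ∀ B : Finset (Fin 5), 2 ≤ #B → Apart A B →
    ∀ C : Finset (Fin 5), 2 ≤ #C → Apart A C → Apart B C →
    ∀ D : Finset (Fin 5), 2 ≤ #D → Apart A D → Apart B D → Apart C D →
    HasDoubleExcess A B C D := by
  decide +kernel

end Finset

section IndexedSums

variable {G ι : Type*} [AddCommGroup G] [DecidableEq ι] {f : ι → G} {A B C D : Finset ι}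

theorem eq_of_subset_of_sum_eq (hzs : ∀ A : Finset ι, A.Nonempty → ∑ i ∈ A, f i ≠ 0)
    (hAB : A ⊆ B) (h : ∑ i ∈ A, f i = ∑ i ∈ B, f i) : A = B := by
  by_contra hne
  have hdiff : (B \ A).Nonempty := sdiff_nonempty.2 fun hBA => hne (hAB.antisymm hBA)
  have hsplit := sum_sdiff hAB (f := f)
  rw [← h] at hsplit
  exact hzs _ hdiff (add_eq_right.1 hsplit)

theorem not_isSwap_of_sum_eq (hf : Function.Injective f)
    (h : ∑ i ∈ A, f i = ∑ i ∈ B, f i) : ¬ IsSwap A B := by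
  rintro ⟨hAB, hBA⟩
  obtain ⟨x, hx⟩ := card_eq_one.1 hAB
  obtain ⟨y, hy⟩ := card_eq_one.1 hBA
  have hxy : f x = f y := by
    have hA := sum_inter_add_sum_sdiff A B f
    have hB := sum_inter_add_sum_sdiff B A f
    rw [hx, sum_singleton] at hA
    rw [hy, sum_singleton, inter_comm] at hB
    exact add_left_cancel (hA.trans (h.trans hB.symm))
  have hxA : x ∈ A \ B := hx ▸ mem_singleton_self x
  have hyB : y ∈ B \ A := hy ▸ mem_singleton_self y
  exact (mem_sdiff.1 hxA).2 (hf hxy ▸ (mem_sdiff.1 hyB).1)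

theorem apart_of_sum_eq (hf : Function.Injective f)
    (hzs : ∀ A : Finset ι, A.Nonempty → ∑ i ∈ A, f i ≠ 0) (hAB : A ≠ B)
    (h : ∑ i ∈ A, f i = ∑ i ∈ B, f i) : Apart A B :=
  ⟨fun hsub => hAB (eq_of_subset_of_sum_eq hzs hsub h),
    fun hsub => hAB (eq_of_subset_of_sum_eq hzs hsub h.symm).symm,
    not_isSwap_of_sum_eq hf h⟩

theorem sum_add_sum_of_exceedsByDouble (h : ExceedsByDouble A B C D) :
    ∃ x, ∑ i ∈ A, f i + ∑ i ∈ B, f i = ∑ i ∈ C, f i + ∑ i ∈ D, f i + (f x + f x) := by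
  obtain ⟨x, hx, hunion, hinter⟩ := h
  have hxinter : x ∉ C ∩ D := fun hmem => hx (mem_union_left _ (mem_inter.1 hmem).1)
  refine ⟨x, ?_⟩
  rw [← sum_union_inter (s₁ := A), ← sum_union_inter (s₁ := C), hunion, hinter, sum_insert hx,
    sum_insert hxinter]
  abel

theorem not_hasDoubleExcess (h2 : ∀ i, f i + f i ≠ 0) {g : G} (hA : ∑ i ∈ A, f i = g)
    (hB : ∑ i ∈ B, f i = g) (hC : ∑ i ∈ C, f i = g) (hD : ∑ i ∈ D, f i = g) :
    ¬ HasDoubleExcess A B C D := by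
  have key : ∀ {P Q U V : Finset ι}, ∑ i ∈ P, f i = g → ∑ i ∈ Q, f i = g →
      ∑ i ∈ U, f i = g → ∑ i ∈ V, f i = g → ¬ ExceedsByDouble P Q U V := by
    intro P Q U V hP hQ hU hV hPQUV
    obtain ⟨x, hx⟩ := sum_add_sum_of_exceedsByDouble (f := f) hPQUV
    rw [hP, hQ, hU, hV] at hx
    exact h2 x (left_eq_add.1 hx)
  rintro (h | h | h | h | h | h)
  exacts [key hA hB hC hD h, key hC hD hA hB h, key hA hC hB hD h, key hB hD hA hC h,
    key hA hD hB hC h, key hB hC hA hD h]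

end IndexedSums

theorem card_sum_eq_le_three_of_injective {G : Type*} [AddCommGroup G] [DecidableEq G]
    {f : Fin 5 → G} (hf : Function.Injective f)
    (hzs : ∀ A : Finset (Fin 5), A.Nonempty → ∑ i ∈ A, f i ≠ 0)
    {g : G} (hg : ∀ i, f i ≠ g) (h2 : ∀ i, f i + f i ≠ 0) :
    #{A : Finset (Fin 5) | A.Nonempty ∧ ∑ i ∈ A, f i = g} ≤ 3 := by
  by_contra! hcard
  obtain ⟨A, B, C, D, hA, hB, hC, hD, hAB, hAC, hAD, hBC, hBD, hCD⟩ := three_lt_card_iff.1 hcard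
  simp only [mem_filter, mem_univ, true_and] at hA hB hC hD
  have two_le_card : ∀ {P : Finset (Fin 5)}, P.Nonempty ∧ ∑ i ∈ P, f i = g → 2 ≤ #P := by
    rintro P ⟨hne, hsum⟩
    by_contra! hlt
    obtain ⟨i, rfl⟩ := card_eq_one.1 (le_antisymm (Nat.le_of_lt_succ hlt) hne.card_pos)
    exact hg i (by simpa using hsum)
  have apart : ∀ {P Q : Finset (Fin 5)}, P ≠ Q → ∑ i ∈ P, f i = g → ∑ i ∈ Q, f i = g →
      Apart P Q := fun hPQ hP hQ => apart_of_sum_eq hf hzs hPQ (hP.trans hQ.symm)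
  exact not_hasDoubleExcess h2 hA.2 hB.2 hC.2 hD.2 <| hasDoubleExcess_of_apart
    A (two_le_card hA) B (two_le_card hB) (apart hAB hA.2 hB.2)
    C (two_le_card hC) (apart hAC hA.2 hC.2) (apart hBC hB.2 hC.2)
    D (two_le_card hD) (apart hAD hA.2 hD.2) (apart hBD hB.2 hD.2) (apart hCD hC.2 hD.2)

namespace ZeroSumFree

variable {G : Type*} [AddCommGroup G] {S : Finset G}

theorem mono {R : Finset G} (hS : ZeroSumFree S) (hRS : R ⊆ S) : ZeroSumFree R :=
  fun T hT => hS T (hT.trans hRS)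

variable [DecidableEq G]

theorem eq_singleton_of_mem (hS : ZeroSumFree S) {T : Finset G} (hTS : T ⊆ S) {g : G}
    (hgT : g ∈ T) (hsum : T.sum id = g) : T = {g} := by
  have hrest : (T.erase g).sum id = 0 := by
    rw [← add_sum_erase T id hgT, id] at hsum
    exact add_eq_left.1 hsum
  by_contra hne
  refine hS _ ((erase_subset g T).trans hTS) ?_ hrest
  rw [Ne, erase_eq_empty_iff]
  rintro (rfl | rfl)
  exacts [notMem_empty g hgT, hne rfl]

theorem card_sum_eq_le_three (hS : ZeroSumFree S) (hcard : #S = 5)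
    (h2 : ∀ x ∈ S, x + x ≠ 0) {g : G} (hg : g ∉ S) :
    #{T ∈ S.powerset | T ≠ ∅ ∧ T.sum id = g} ≤ 3 := by
  let e := S.equivFinOfCardEq hcard
  let f : Fin 5 → G := fun i => e.symm i
  have hf : Function.Injective f := Subtype.val_injective.comp e.symm.injective
  have hfS : ∀ i, f i ∈ S := fun i => (e.symm i).2
  have hrange : univ.image f = S := by
    ext x
    simp only [mem_image, mem_univ, true_and]
    exact ⟨fun ⟨i, hi⟩ => hi ▸ hfS i, fun hx => ⟨e ⟨x, hx⟩, by simp [f]⟩⟩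
  have hsum : ∀ A : Finset (Fin 5), (A.image f).sum id = ∑ i ∈ A, f i := fun A =>
    sum_image fun i _ j _ hij => hf hij
  have hzs : ∀ A : Finset (Fin 5), A.Nonempty → ∑ i ∈ A, f i ≠ 0 := fun A hA => by
    rw [← hsum]
    exact hS _ (hrange ▸ image_subset_image (subset_univ A)) (hA.image f).ne_empty
  calc #{T ∈ S.powerset | T ≠ ∅ ∧ T.sum id = g}
      ≤ #((univ.filter fun A : Finset (Fin 5) => A.Nonempty ∧ ∑ i ∈ A, f i = g).image
          (·.image f)) := by
        refine card_le_card fun T hT => ?_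
        obtain ⟨hTS, hne, hTsum⟩ := by simpa only [mem_filter, mem_powerset] using hT
        obtain ⟨A, -, rfl⟩ := subset_image_iff.1 (hrange ▸ hTS : T ⊆ univ.image f)
        refine mem_image.2 ⟨A, ?_, rfl⟩
        simp only [mem_filter, mem_univ, true_and]
        exact ⟨image_nonempty.1 (nonempty_iff_ne_empty.2 hne), hsum A ▸ hTsum⟩
    _ ≤ #{A : Finset (Fin 5) | A.Nonempty ∧ ∑ i ∈ A, f i = g} := card_image_le
    _ ≤ 3 := card_sum_eq_le_three_of_injective hf hzs (fun i hi => hg (hi ▸ hfS i))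
        fun i => h2 _ (hfS i)

end ZeroSumFree

theorem stmt11 {G : Type*} [AddCommGroup G] [DecidableEq G] (S : Finset G)
    (hS : ZeroSumFree S) (hcard : S.card = 6)
    (hord : ∀ g ∈ S, g ≠ 0 ∧ g + g ≠ 0) :
    ∀ g ∈ S, (S.powerset.filter (fun T => T ≠ ∅ ∧ T.sum id = g)).card ≤ 4 := by
  intro g hg
  have hsub : S.powerset.filter (fun T => T ≠ ∅ ∧ T.sum id = g) ⊆
      insert {g} ((S.erase g).powerset.filter (fun T => T ≠ ∅ ∧ T.sum id = g)) := by
    intro T hT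
    obtain ⟨hTS, hne, hTsum⟩ := by simpa only [mem_filter, mem_powerset] using hT
    by_cases hgT : g ∈ T
    · exact mem_insert.2 (Or.inl (hS.eq_singleton_of_mem hTS hgT hTsum))
    · exact mem_insert_of_mem <|
        mem_filter.2 ⟨mem_powerset.2 (subset_erase.2 ⟨hTS, hgT⟩), hne, hTsum⟩
  calc _ ≤ _ := card_le_card hsub
    _ ≤ _ := card_insert_le _ _
    _ ≤ 3 + 1 := by
      gcongr
      exact (hS.mono (erase_subset g S)).card_sum_eq_le_three
        (by rw [card_erase_of_mem hg, hcard]) (fun x hx => (hord x (mem_of_mem_erase hx)).2)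
        (notMem_erase g S)
end
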